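/- Let μ₂ ≤ μ₁ be nonnegative real numbers with Δ := μ₁ − μ₂ > 0, let n > 0, and let L > 0. If L/n < 3Δ/28 and L/n < Δ²/(128·μ₁), then μ₂ + (14/(3n))·L + 2·√(2·μ₂·L/n) < μ₁ − 2·√(2·μ₁·L/n). -/

import Mathlib

open Real

/-! Both square roots are below `Δ/8` and the linear term is below `Δ/2`, so the left-hand side
is below `μ₂ + 5Δ/8` while the right-hand side is above `μ₂ + 3Δ/4`. -/

lemma sqrt_two_mul_lt_of_lt_div {μ Δ r : ℝ} (hμ : 0 < μ) (hΔ : 0 < Δ)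
    (h : r < Δ ^ 2 / (128 * μ)) : √(2 * μ * r) < Δ / 8 := by
  rw [Real.sqrt_lt' (by positivity)]
  rw [lt_div_iff₀ (by positivity)] at h
  nlinarith

theorem envelope_separation (μ₁ μ₂ n L : ℝ) (hμ₂ : 0 ≤ μ₂)
    (hΔ : 0 < μ₁ - μ₂) (hn : 0 < n) (hL : 0 < L)
    (h1 : L / n < 3 * (μ₁ - μ₂) / 28)
    (h2 : L / n < (μ₁ - μ₂) ^ 2 / (128 * μ₁)) :
    μ₂ + (14 / (3 * n)) * L + 2 * Real.sqrt (2 * μ₂ * L / n) <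
      μ₁ - 2 * Real.sqrt (2 * μ₁ * L / n) := by
  have hμ₁ : 0 < μ₁ := by linarith
  have hsqrt₁ : √(2 * μ₁ * L / n) < (μ₁ - μ₂) / 8 := by
    rw [mul_div_assoc]
    exact sqrt_two_mul_lt_of_lt_div hμ₁ hΔ h2
  have hsqrt₂ : √(2 * μ₂ * L / n) ≤ √(2 * μ₁ * L / n) :=
    Real.sqrt_le_sqrt (by gcongr; linarith)
  have hlinear : 14 / (3 * n) * L < (μ₁ - μ₂) / 2 := by
    have : 14 / (3 * n) * L = 14 / 3 * (L / n) := by ring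
    linarith
  linarith
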